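/- Let ρ ∈ H be an invertible group-like element (Δρ = ρ⊗ρ), and let θ_ρ be the algebra automorphism of B given by θ_ρ(b) = b◁ρ. For f ∈ C^n_H(B), the functional ρ_* f on B^{⊗(n+1)} defined by (ρ_* f)(b₀ ⊗ ⋯ ⊗ bₙ) = f(ρ ⊗ b₀ ⊗ ⋯ ⊗ bₙ) is a cochain of the θ_ρ-twisted cyclic complex of B, ρ_* sends equivariant cyclic cocycles to twisted cyclic cocycles and induces a map ρ_* : HC^n_H(B) → HC^n_{θ_ρ}(B), and for every finite-dimensional right H-module X and every H-invariant idempotent p ∈ End(X)⊗B the pairings are compatible: ⟨ρ_*[f], [p]⟩_ρ = ⟨[f],[p]⟩(ρ), i.e. (Ψ^{2n}_ρ(ρ_* f))(p ⊗ ⋯ ⊗ p) = (Ψ^{2n} f)(ρ ⊗ p ⊗ ⋯ ⊗ p). -/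

import Mathlib

open scoped TensorProduct

noncomputable section

/-- A Hopf `ℂ`-algebra with invertible antipode, together with a chosen finite
(Sweedler) representation of the comultiplication: `Δ ω = ∑_{p ∈ Δl ω} p.1 ⊗ p.2`. -/
structure HopfData (H : Type) [Ring H] [HopfAlgebra ℂ H] where
  /-- the inverse of the antipode -/
  Sinv : H →ₗ[ℂ] H
  Sinv_antipode : ∀ ω : H, Sinv (HopfAlgebra.antipode (R := ℂ) ω) = ω
  antipode_Sinv : ∀ ω : H, HopfAlgebra.antipode (R := ℂ) (Sinv ω) = ω
  /-- a chosen list representation of the comultiplication -/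
  Δl : H → List (H × H)
  Δl_repr : ∀ ω : H,
    (Coalgebra.comul (R := ℂ) ω : H ⊗[ℂ] H) = ((Δl ω).map fun p => p.1 ⊗ₜ[ℂ] p.2).sum

variable {H : Type} [Ring H] [HopfAlgebra ℂ H]

/-- the counit, as a `ℂ`-valued function -/
def epsi (ω : H) : ℂ := Coalgebra.counit (R := ℂ) ω

/-- Iterated Sweedler decomposition: `sw n ω` represents
`Δⁿ ω = ∑_v v 0 ⊗ ⋯ ⊗ v n`, where `Δⁿ = (ι ⊗ Δ) Δ^{n-1}`. -/
def HopfData.sw (D : HopfData H) : (n : ℕ) → H → List (Fin (n + 1) → H)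
  | 0, ω => [fun _ => ω]
  | n + 1, ω =>
    (D.sw n ω).flatMap fun v =>
      (D.Δl (v (Fin.last n))).map fun p =>
        Fin.snoc (Function.update v (Fin.last n) p.1) p.2

/-- A right `H`-module structure (over `ℂ`), recorded as the antihomomorphism
`act : H → End(B)`, so `act ω b` stands for `b ◁ ω`. -/
structure RAct (H : Type) [Ring H] [HopfAlgebra ℂ H] (B : Type) [AddCommGroup B]
    [Module ℂ B] where
  act : H →ₗ[ℂ] B →ₗ[ℂ] B
  act_one : act 1 = LinearMap.id
  act_mul : ∀ ω η : H, act (ω * η) = (act η) ∘ₗ (act ω)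

/-- A unital right `H`-module algebra structure on `B`:
`(b₁ b₂) ◁ ω = ∑ (b₁ ◁ ω₍₀₎)(b₂ ◁ ω₍₁₎)` and `1 ◁ ω = ε(ω) 1`. -/
structure MAlg (D : HopfData H) (B : Type) [Ring B] [Algebra ℂ B] extends RAct H B where
  act_mul_mul : ∀ (ω : H) (b₁ b₂ : B),
    act ω (b₁ * b₂) = ((D.Δl ω).map fun p => act p.1 b₁ * act p.2 b₂).sum
  act_algOne : ∀ ω : H, act ω (1 : B) = epsi ω • (1 : B)


/-- the action as a plain function: `fn ω b = b ◁ ω` -/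
def RAct.fn {H : Type} [Ring H] [HopfAlgebra ℂ H] {B : Type} [AddCommGroup B] [Module ℂ B]
    (A : RAct H B) : H → B → B := fun ω x => A.act ω x

/-- the action of a module algebra as a plain function -/
def MAlg.fn {H : Type} [Ring H] [HopfAlgebra ℂ H] {B : Type} [Ring B] [Algebra ℂ B]
    {D : HopfData H} (A : MAlg D B) : H → B → B := A.toRAct.fn

/-- The space of `ℂ`-valued functions of one `H`-variable and `n+1` `B`-variables;
(multi)linear such functions correspond to linear functionals on `H ⊗ B^{⊗(n+1)}`. -/
abbrev Raw (H B : Type) (n : ℕ) := H → (Fin (n + 1) → B) → ℂ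

section Raw

variable {H : Type} [Ring H] [HopfAlgebra ℂ H] {B : Type} [Ring B] [Algebra ℂ B] {n : ℕ}

/-- `f` is linear in the `H`-variable and in each `B`-variable separately, i.e. `f`
is (the restriction of) a linear functional on `H ⊗ B^{⊗(n+1)}`. -/
def IsML (f : Raw H B n) : Prop :=
  (∀ ω η b, f (ω + η) b = f ω b + f η b) ∧
  (∀ (c : ℂ) ω b, f (c • ω) b = c * f ω b) ∧
  (∀ ω b (i : Fin (n + 1)) (x y : B),
    f ω (Function.update b i (x + y)) =
      f ω (Function.update b i x) + f ω (Function.update b i y)) ∧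
  (∀ ω b (i : Fin (n + 1)) (c : ℂ) (x : B),
    f ω (Function.update b i (c • x)) = c * f ω (Function.update b i x))

/-- `H`-invariance of the functional `f` on `H ⊗ B^{⊗(n+1)}`:
`(ω ▷ f)(η ⊗ b₀ ⊗ ⋯ ⊗ bₙ) = f(S⁻¹(ω₍₀₎) η ω₍₁₎ ⊗ b₀ ◁ ω₍₂₎ ⊗ ⋯ ⊗ bₙ ◁ ω₍ₙ₊₂₎)`
equals `ε(ω) f(η ⊗ b₀ ⊗ ⋯ ⊗ bₙ)`. -/
def IsInv (D : HopfData H) (act : H → B → B) (f : Raw H B n) : Prop :=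
  ∀ (ω η : H) (b : Fin (n + 1) → B),
    ((D.sw (n + 2) ω).map fun v =>
        f (D.Sinv (v 0) * η * v 1) fun i => act (v i.succ.succ) (b i)).sum
      = epsi ω * f η b

/-- membership in the equivariant cochain space `C^n_H(B)` -/
def InC (D : HopfData H) (act : H → B → B) (f : Raw H B n) : Prop :=
  IsML f ∧ IsInv D act f

/-- the cyclic operator
`(tₙ f)(ω ⊗ b₀ ⊗ ⋯ ⊗ bₙ) = f(ω₍₀₎ ⊗ bₙ ◁ ω₍₁₎ ⊗ b₀ ⊗ ⋯ ⊗ b_{n-1})` -/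
def tRaw (D : HopfData H) (act : H → B → B) (f : Raw H B n) : Raw H B n :=
  fun ω b =>
    ((D.Δl ω).map fun p =>
      f p.1 (Fin.cons (act p.2 (b (Fin.last n))) fun i : Fin n => b i.castSucc)).sum

/-- merging the `i`-th and `(i+1)`-st entries of a `(n+2)`-tuple by multiplication -/
def contract (i : Fin (n + 1)) (b : Fin (n + 2) → B) : Fin (n + 1) → B :=
  fun j =>
    if (j : ℕ) < (i : ℕ) then b j.castSucc
    else if (j : ℕ) = (i : ℕ) then b j.castSucc * b j.succ
    else b j.succ

/-- the coface operators `dⁿᵢ : C^{n} → C^{n+1}` (`i < n+1` multiplies adjacent entries;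
the last one is `d_{n+1} = t ∘ d₀`) -/
def dRaw (D : HopfData H) (act : H → B → B) (i : Fin (n + 2)) (f : Raw H B n) :
    Raw H B (n + 1) :=
  if h : (i : ℕ) < n + 1 then fun ω b => f ω (contract ⟨i, h⟩ b)
  else tRaw D act fun ω b => f ω (contract 0 b)

/-- the codegeneracy operators `sⁿᵢ : C^{n+1} → C^n`, inserting a `1` after the `i`-th entry -/
def sRaw (i : Fin (n + 1)) (f : Raw H B (n + 1)) : Raw H B n :=
  fun ω b => f ω (Fin.insertNth i.succ 1 b)

/-- the Hochschild coboundary `b = ∑ (-1)ⁱ dᵢ` -/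
def bRaw (D : HopfData H) (act : H → B → B) (f : Raw H B n) : Raw H B (n + 1) :=
  fun ω b => ∑ i : Fin (n + 2), ((-1 : ℂ) ^ (i : ℕ)) * dRaw D act i f ω b

/-- cyclicity: `λ f = (-1)ⁿ tₙ f = f` -/
def IsCyc (D : HopfData H) (act : H → B → B) (f : Raw H B n) : Prop :=
  ∀ ω b, ((-1 : ℂ) ^ n) * tRaw D act f ω b = f ω b

/-- an `n`-cocycle of the cyclic complex `(Ker(1-λ), b)` computing `HC^n_H(B)` -/
def IsCocycle (D : HopfData H) (act : H → B → B) (f : Raw H B n) : Prop :=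
  InC D act f ∧ IsCyc D act f ∧ ∀ ω b, bRaw D act f ω b = 0

end Raw

section Mat

variable {H : Type} [Ring H] [HopfAlgebra ℂ H]

/-- A finite-dimensional right `H`-module, presented as a matrix antirepresentation
`π : H → Matrix ι ι ℂ` (so `x ◁ ω` is the row vector `x · π(ω)`). -/
structure MRep (H : Type) [Ring H] [HopfAlgebra ℂ H] (ι : Type) [Fintype ι]
    [DecidableEq ι] where
  π : H →ₗ[ℂ] Matrix ι ι ℂ
  π_one : π 1 = 1
  π_mul : ∀ ω η : H, π (ω * η) = π η * π ω

variable {B : Type} [Ring B] [Algebra ℂ B]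
variable {ι κ : Type} [Fintype ι] [DecidableEq ι] [Fintype κ] [DecidableEq κ]

/-- The right `H`-action on `Hom(X, X') ⊗ B` (realized as rectangular matrices over `B`):
`(T ⊗ b) ◀ ω = π'(ω₍₀₎) T π(S⁻¹(ω₍₂₎)) ⊗ b ◁ ω₍₁₎`. -/
def matActR (D : HopfData H) (P : MRep H ι) (P' : MRep H κ) (A : RAct H B) :
    H → Matrix κ ι B → Matrix κ ι B :=
  fun ω M =>
    ((D.sw 2 ω).map fun v =>
      ((P'.π (v 0)).map (algebraMap ℂ B)) *
        (M.map fun x => A.act (v 1) x) *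
          ((P.π (D.Sinv (v 2))).map (algebraMap ℂ B))).sum

/-- the right `H`-action on `End(X) ⊗ B`, realized as `Matrix ι ι B` -/
def matAct (D : HopfData H) (P : MRep H ι) (A : RAct H B) :
    H → Matrix ι ι B → Matrix ι ι B :=
  matActR D P P A

/-- The map `Ψⁿ : C^n_H(B) → C^n_H(End(X) ⊗ B)`,
`(Ψⁿ f)(ω ⊗ (T₀⊗b₀) ⊗ ⋯ ⊗ (Tₙ⊗bₙ)) = f(ω₍₀₎ ⊗ b₀ ⊗ ⋯ ⊗ bₙ) Tr(π(S⁻¹(ω₍₁₎)) T₀ ⋯ Tₙ)`,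
written out on matrices over `B`. -/
def PsiRaw (D : HopfData H) (P : MRep H ι) {n : ℕ} (f : Raw H B n) :
    Raw H (Matrix ι ι B) n :=
  fun ω M =>
    ((D.Δl ω).map fun p =>
      ∑ k : Fin (n + 2) → ι,
        (P.π (D.Sinv p.2)) (k (Fin.last (n + 1))) (k 0) *
          f p.1 fun i => M i (k i.castSucc) (k i.succ)).sum

/-- the right `H`-action on `X ⊗ B` (tensor product action), `X` realized as row
vectors with matrix antirepresentation `P` -/
def ractV (D : HopfData H) (P : MRep H ι) (A : RAct H B) (ω : H) (v : ι → B) : ι → B :=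
  fun j => ((D.Δl ω).map fun p => ∑ i, (P.π p.1) i j • A.act p.2 (v i)).sum

/-- membership in `R(H)`, the `H`-invariant linear functionals on `H` (with the
adjoint action `η ◁ ω = S⁻¹(ω₍₀₎) η ω₍₁₎`) -/
def IsRH (D : HopfData H) (F : H → ℂ) : Prop :=
  (∀ ω η : H, F (ω + η) = F ω + F η) ∧
  (∀ (c : ℂ) (ω : H), F (c • ω) = c * F ω) ∧
  (∀ ω η : H, ((D.Δl ω).map fun p => F (D.Sinv p.1 * η * p.2)).sum = epsi ω * F η)

end Mat

section Twisted

variable {B : Type} [Ring B]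

/-- the cofaces of the `θ`-twisted cyclic complex of `B` (Kustermans–Murphy–Tuset):
for `i < n+1` multiplication of adjacent entries, and for the last index
`(dₙ g)(b₀ ⊗ ⋯ ⊗ bₙ) = g(θ(bₙ) b₀ ⊗ b₁ ⊗ ⋯ ⊗ b_{n-1})`. -/
def twCon (θ : B → B) {n : ℕ} (i : Fin (n + 2)) (b : Fin (n + 2) → B) :
    Fin (n + 1) → B :=
  if h : (i : ℕ) < n + 1 then contract ⟨i, h⟩ b
  else Fin.cons (θ (b (Fin.last (n + 1))) * b 0) fun j : Fin n => b j.succ.castSucc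

end Twisted

/-! Since `ρ` is group-like, `Δⁿ ρ = ρ ⊗ ⋯ ⊗ ρ`, so every Sweedler sum over `Δⁿ ρ` of an
expression multilinear in the components collapses to its value at `(ρ, …, ρ)`; moreover
`ε(ρ) = 1` and `S⁻¹(ρ) = S(ρ) = ρ⁻¹`. The invariance condition at `ω = η = ρ` then reads
`f(ρ ⊗ θ_ρ b) = f(ρ ⊗ b)`, the cyclic operator and the last coface evaluated at `ρ` become their
`θ_ρ`-twisted counterparts, and the factor `π(S⁻¹ ρ)` in `(Ψ f)(ρ ⊗ ⋯)` becomes `π(ρ⁻¹)`. -/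

open HopfAlgebra Coalgebra

section GroupLike

variable {ρ ρi : H}

theorem isGroupLikeElem_of_comul_eq_tmul (hgrp : comul (R := ℂ) ρ = ρ ⊗ₜ[ℂ] ρ)
    (hρρi : ρ * ρi = 1) : IsGroupLikeElem ℂ ρ := by
  refine ⟨?_, hgrp⟩
  have hsmul : counit (R := ℂ) ρ • ρ = ρ := by
    simpa [hgrp] using congrArg (TensorProduct.lid ℂ H) (rTensor_counit_comul (R := ℂ) ρ)
  have hidem : counit (R := ℂ) ρ * counit (R := ℂ) ρ = counit (R := ℂ) ρ := by
    simpa using congrArg (counit (R := ℂ)) hsmul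
  have hne : counit (R := ℂ) ρ ≠ 0 := by
    intro h0
    have := congrArg (counit (R := ℂ)) hρρi
    simp [h0] at this
  exact mul_left_cancel₀ hne (by rw [hidem, mul_one])

theorem HopfData.Sinv_eq_antipode (D : HopfData H) (hρ : IsGroupLikeElem ℂ ρ) :
    D.Sinv ρ = antipode ℂ ρ := by
  conv_lhs => rw [← hρ.antipode_antipode]
  exact D.Sinv_antipode _

end GroupLike

/-- `φ ∘ (id^{⊗ n} ⊗ Δ)` -/
def MultilinearMap.compComulLast {M : Type*} [AddCommMonoid M] [Module ℂ M] {n : ℕ}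
    (φ : MultilinearMap ℂ (fun _ : Fin (n + 2) => H) M) :
    MultilinearMap ℂ (fun _ : Fin (n + 1) => H) M :=
  MultilinearMap.uncurryRight
    ((LinearMap.lcomp ℂ M (comul (R := ℂ) (A := H)) ∘ₗ TensorProduct.uncurry (RingHom.id ℂ) H H M)
      |>.compMultilinearMap φ.curryRight.curryRight)

theorem MultilinearMap.compComulLast_apply {M : Type*} [AddCommMonoid M] [Module ℂ M] {n : ℕ}
    (φ : MultilinearMap ℂ (fun _ : Fin (n + 2) => H) M) (v : Fin (n + 1) → H) :
    φ.compComulLast v =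
      TensorProduct.lift (φ.curryRight.curryRight (Fin.init v)) (comul (R := ℂ) (v (Fin.last n))) :=
  rfl

namespace HopfData

variable (D : HopfData H) {M : Type*} [AddCommMonoid M] [Module ℂ M] {ρ : H}

theorem sum_Δl_eq_lift (β : H →ₗ[ℂ] H →ₗ[ℂ] M) (ω : H) :
    ((D.Δl ω).map fun p => β p.1 p.2).sum = TensorProduct.lift β (comul (R := ℂ) ω) := by
  rw [D.Δl_repr, map_list_sum, List.map_map]
  rfl

theorem sum_Δl_of_isGroupLikeElem (hρ : IsGroupLikeElem ℂ ρ) (β : H →ₗ[ℂ] H →ₗ[ℂ] M) :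
    ((D.Δl ρ).map fun p => β p.1 p.2).sum = β ρ ρ := by
  rw [sum_Δl_eq_lift, hρ.comul_eq_tmul_self, TensorProduct.lift.tmul]

theorem sum_sw_succ {n : ℕ} (φ : MultilinearMap ℂ (fun _ : Fin (n + 2) => H) M) (ω : H) :
    ((D.sw (n + 1) ω).map φ).sum = ((D.sw n ω).map φ.compComulLast).sum := by
  have hupdate (v : Fin (n + 1) → H) (a : H) :
      Function.update v (Fin.last n) a = Fin.snoc (Fin.init v) a := by
    simpa using (Fin.snoc_init_self (Function.update v (Fin.last n) a)).symm
  simp only [sw, List.flatMap, List.map_flatten, List.sum_flatten, List.map_map,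
    Function.comp_def, hupdate]
  congr 1
  refine List.map_congr_left fun v _ => ?_
  rw [MultilinearMap.compComulLast_apply, ← sum_Δl_eq_lift D]
  rfl

theorem sum_sw_of_isGroupLikeElem (hρ : IsGroupLikeElem ℂ ρ) :
    ∀ (n : ℕ) (φ : MultilinearMap ℂ (fun _ : Fin (n + 1) => H) M),
      ((D.sw n ρ).map φ).sum = φ fun _ => ρ
  | 0, φ => by simp [sw]
  | n + 1, φ => by
    rw [sum_sw_succ, sum_sw_of_isGroupLikeElem hρ n, MultilinearMap.compComulLast_apply,
      hρ.comul_eq_tmul_self, TensorProduct.lift.tmul]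
    simp only [MultilinearMap.curryRight_apply]
    congr 1
    funext i
    refine Fin.lastCases ?_ (fun j => ?_) i <;> simp

end HopfData

section Invariance

variable {B : Type} [Ring B] [Algebra ℂ B] {n : ℕ} {f : Raw H B n}

def IsML.toLinearMap (hf : IsML f) : H →ₗ[ℂ] MultilinearMap ℂ (fun _ : Fin (n + 1) => B) ℂ where
  toFun ω := MultilinearMap.mk' (f ω) (hf.2.2.1 ω) (fun b i c x => hf.2.2.2 ω b i c x)
  map_add' ω η := by ext b; exact hf.1 ω η b
  map_smul' c ω := by ext b; exact hf.2.1 c ω b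


/-- The summand `v ↦ f(S⁻¹(v₀) η v₁ ⊗ b₀ ◁ v₂ ⊗ ⋯ ⊗ bₙ ◁ vₙ₊₂)` of the invariance condition `IsInv`,
as a multilinear map of the Sweedler components `v`. -/
def IsML.invarianceSummand (hf : IsML f) (D : HopfData H) (act : H →ₗ[ℂ] B →ₗ[ℂ] B) (η : H)
    (b : Fin (n + 1) → B) : MultilinearMap ℂ (fun _ : Fin (n + 3) => H) ℂ :=
  LinearMap.uncurryLeft
    ((multilinearCurryLeftEquiv ℂ (fun _ : Fin (n + 2) => H) ℂ).symm.toLinearMap ∘ₗ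
      (LinearMap.mul ℂ H ∘ₗ LinearMap.mulRight ℂ η ∘ₗ D.Sinv).compr₂
        (MultilinearMap.compLinearMapₗ (fun i => act.flip (b i)) ∘ₗ hf.toLinearMap))

theorem InC.apply_act_of_isGroupLikeElem {D : HopfData H} {A : MAlg D B} {ρ : H}
    (hf : InC D A.fn f) (hρ : IsGroupLikeElem ℂ ρ) (b : Fin (n + 1) → B) :
    f ρ (fun i => A.fn ρ (b i)) = f ρ b := by
  have hinv : f (D.Sinv ρ * ρ * ρ) (fun i => A.fn ρ (b i)) = epsi ρ * f ρ b :=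
    (D.sum_sw_of_isGroupLikeElem hρ (n + 2) (hf.1.invarianceSummand D A.act ρ b)).symm.trans
      (hf.2 ρ ρ b)
  rwa [D.Sinv_eq_antipode hρ, hρ.antipode_mul_cancel, one_mul, epsi, hρ.counit_eq_one,
    one_mul] at hinv

end Invariance

theorem contract_zero_cons {B : Type} [Ring B] {n : ℕ} (x : B) (w : Fin (n + 1) → B) :
    contract 0 (Fin.cons x w) = Fin.cons (x * w 0) (Fin.tail w) := by
  funext j
  refine Fin.cases ?_ (fun k => ?_) j
  · simp [contract]
  · simp [contract, Fin.tail]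

section Cyclic

variable {B : Type} [Ring B] [Algebra ℂ B] {n : ℕ} {D : HopfData H} {A : MAlg D B} {ρ : H}

def IsML.consBilin {f : Raw H B n} (hf : IsML f) (w : Fin n → B) : H →ₗ[ℂ] B →ₗ[ℂ] ℂ :=
  LinearMap.mk₂ ℂ (fun a x => hf.toLinearMap a (Fin.cons x w))
    (fun a a' x => by rw [map_add]; rfl)
    (fun c a x => by rw [map_smul]; rfl)
    (fun a x y => MultilinearMap.cons_add _ _ _ _)
    (fun c a x => MultilinearMap.cons_smul _ _ _ _)

theorem tRaw_apply_of_isGroupLikeElem (hρ : IsGroupLikeElem ℂ ρ) (F : Raw H B n)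
    (b : Fin (n + 1) → B) (β : H →ₗ[ℂ] B →ₗ[ℂ] ℂ)
    (hβ : ∀ a x, β a x = F a (Fin.cons x fun i : Fin n => b i.castSucc)) :
    tRaw D A.fn F ρ b = F ρ (Fin.cons (A.fn ρ (b (Fin.last n))) fun i : Fin n => b i.castSucc) := by
  simp only [tRaw, ← hβ]
  exact D.sum_Δl_of_isGroupLikeElem hρ (β.compl₂ (A.act.flip (b (Fin.last n))))

theorem bRaw_apply_of_isGroupLikeElem {g : Raw H B n} (hg : IsML g) (hρ : IsGroupLikeElem ℂ ρ)
    (b : Fin (n + 2) → B) :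
    bRaw D A.fn g ρ b = ∑ i : Fin (n + 2), (-1 : ℂ) ^ (i : ℕ) * g ρ (twCon (A.fn ρ) i b) := by
  refine Finset.sum_congr rfl fun i _ => ?_
  by_cases hi : (i : ℕ) < n + 1
  · rw [dRaw, dif_pos hi, twCon, dif_pos hi]
  · rw [dRaw, dif_neg hi, twCon, dif_neg hi,
      tRaw_apply_of_isGroupLikeElem hρ _ b
        ((hg.consBilin (Fin.tail fun i => b i.castSucc)).compl₂ (LinearMap.mulRight ℂ (b 0)))
        (fun a x => by rw [contract_zero_cons]; rfl),
      contract_zero_cons]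
    rfl

end Cyclic

theorem PsiRaw_apply_of_isGroupLikeElem {B : Type} [Ring B] [Algebra ℂ B] {n : ℕ}
    {ι : Type} [Fintype ι] [DecidableEq ι] (D : HopfData H) (P : MRep H ι) {f : Raw H B n}
    (hf : IsML f) {ρ : H} (hρ : IsGroupLikeElem ℂ ρ) (M : Fin (n + 1) → Matrix ι ι B) :
    PsiRaw D P f ρ M = ∑ k : Fin (n + 2) → ι,
      (P.π (antipode ℂ ρ)) (k (Fin.last (n + 1))) (k 0) *
        f ρ (fun i => M i (k i.castSucc) (k i.succ)) := by
  rw [← D.Sinv_eq_antipode hρ]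
  exact D.sum_Δl_of_isGroupLikeElem hρ <| LinearMap.mk₂ ℂ
    (fun a c => ∑ k : Fin (n + 2) → ι,
      (P.π (D.Sinv c)) (k (Fin.last (n + 1))) (k 0) * f a (fun i => M i (k i.castSucc) (k i.succ)))
    (fun a a' c => by simp only [hf.1, mul_add, Finset.sum_add_distrib])
    (fun s a c => by simp only [hf.2.1, smul_eq_mul, Finset.mul_sum, mul_left_comm])
    (fun a c c' => by simp only [map_add, Matrix.add_apply, add_mul, Finset.sum_add_distrib])
    (fun s a c => by simp only [map_smul, Matrix.smul_apply, smul_eq_mul, Finset.mul_sum, mul_assoc])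

theorem rho_star_to_twisted_cyclic_general
    {H : Type} [Ring H] [HopfAlgebra ℂ H] (D : HopfData H)
    {B : Type} [Ring B] [Algebra ℂ B] (A : MAlg D B)
    (ρ ρi : H) (hgrp : Coalgebra.comul (R := ℂ) ρ = ρ ⊗ₜ[ℂ] ρ)
    (hρρi : ρ * ρi = 1) :
    -- `ρ_* f` is a twisted cochain: it is `θ_ρ`-invariant
    (∀ (n : ℕ) (f : Raw H B n), InC D A.fn f →
      ∀ b : Fin (n + 1) → B, f ρ (fun i => A.fn ρ (b i)) = f ρ b) ∧
    -- `ρ_*` sends cyclic cocycles to twisted cyclic cocycles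
    (∀ (n : ℕ) (f : Raw H B n), IsCocycle D A.fn f →
      (∀ b : Fin (n + 1) → B,
        ((-1 : ℂ) ^ n) *
            f ρ (Fin.cons (A.fn ρ (b (Fin.last n))) fun i : Fin n => b i.castSucc)
          = f ρ b) ∧
      (∀ b : Fin (n + 2) → B,
        ∑ i : Fin (n + 2), ((-1 : ℂ) ^ (i : ℕ)) * f ρ (twCon (A.fn ρ) i b) = 0)) ∧
    -- `ρ_*` intertwines the coboundaries: `ρ_* (b g) = b_θ (ρ_* g)`
    (∀ (n : ℕ) (g : Raw H B n), InC D A.fn g →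
      ∀ b : Fin (n + 2) → B,
        bRaw D A.fn g ρ b
          = ∑ i : Fin (n + 2), ((-1 : ℂ) ^ (i : ℕ)) * g ρ (twCon (A.fn ρ) i b)) ∧
    -- compatibility of the pairings on `H`-invariant idempotents
    (∀ (n : ℕ) (ι : Type) [Fintype ι] [DecidableEq ι],
      ∀ (P : MRep H ι) (p : Matrix ι ι B), p * p = p →
      (∀ ω : H, matAct D P A.toRAct ω p = epsi ω • p) →
      ∀ f : Raw H B (2 * n), IsCocycle D A.fn f →
        (∑ k : Fin (2 * n + 2) → ι,
          (P.π ρi) (k (Fin.last (2 * n + 1))) (k 0) *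
            f ρ (fun i => p (k i.castSucc) (k i.succ)))
          = PsiRaw D P f ρ (fun _ => p)) := by
  have hρ : IsGroupLikeElem ℂ ρ := isGroupLikeElem_of_comul_eq_tmul hgrp hρρi
  have hρi : antipode ℂ ρ = ρi := left_inv_eq_right_inv hρ.antipode_mul_cancel hρρi
  refine ⟨fun n f hf => hf.apply_act_of_isGroupLikeElem hρ,
    fun n f hf => ⟨fun b => ?_, fun b => ?_⟩,
    fun n g hg => bRaw_apply_of_isGroupLikeElem hg.1 hρ, ?_⟩
  · rw [← tRaw_apply_of_isGroupLikeElem hρ f b (hf.1.1.consBilin _) fun _ _ => rfl]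
    exact hf.2.1 ρ b
  · rw [← bRaw_apply_of_isGroupLikeElem hf.1.1 hρ]
    exact hf.2.2 ρ b
  · intro n ι _ _ P p _ _ f hf
    rw [PsiRaw_apply_of_isGroupLikeElem D P hf.1.1 hρ, hρi]

/-- for an invertible group-like `ρ ∈ H` and the twist
`θ_ρ(b) = b ◁ ρ`, the map `(ρ_* f)(b₀ ⊗ ⋯ ⊗ bₙ) = f(ρ ⊗ b₀ ⊗ ⋯ ⊗ bₙ)` sends
equivariant cochains to twisted cochains and equivariant cyclic cocycles to
`θ_ρ`-twisted cyclic cocycles, it intertwines the Hochschild coboundaries (hence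
induces `ρ_* : HC^n_H(B) → HC^n_{θ_ρ}(B)`), and the pairings are compatible:
`⟨ρ_*[f], [p]⟩_ρ = ⟨[f], [p]⟩(ρ)`, i.e.
`(Ψ^{2n}_ρ(ρ_* f))(p ⊗ ⋯ ⊗ p) = (Ψ^{2n} f)(ρ ⊗ p ⊗ ⋯ ⊗ p)`. -/
theorem rho_star_to_twisted_cyclic
    {H : Type} [Ring H] [HopfAlgebra ℂ H] (D : HopfData H)
    {B : Type} [Ring B] [Algebra ℂ B] (A : MAlg D B)
    (ρ ρi : H) (hgrp : Coalgebra.comul (R := ℂ) ρ = ρ ⊗ₜ[ℂ] ρ)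
    (hρρi : ρ * ρi = 1) (hρiρ : ρi * ρ = 1) :
    -- `ρ_* f` is a twisted cochain: it is `θ_ρ`-invariant
    (∀ (n : ℕ) (f : Raw H B n), InC D A.fn f →
      ∀ b : Fin (n + 1) → B, f ρ (fun i => A.fn ρ (b i)) = f ρ b) ∧
    -- `ρ_*` sends cyclic cocycles to twisted cyclic cocycles
    (∀ (n : ℕ) (f : Raw H B n), IsCocycle D A.fn f →
      (∀ b : Fin (n + 1) → B,
        ((-1 : ℂ) ^ n) *
            f ρ (Fin.cons (A.fn ρ (b (Fin.last n))) fun i : Fin n => b i.castSucc)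
          = f ρ b) ∧
      (∀ b : Fin (n + 2) → B,
        ∑ i : Fin (n + 2), ((-1 : ℂ) ^ (i : ℕ)) * f ρ (twCon (A.fn ρ) i b) = 0)) ∧
    -- `ρ_*` intertwines the coboundaries: `ρ_* (b g) = b_θ (ρ_* g)`
    (∀ (n : ℕ) (g : Raw H B n), InC D A.fn g →
      ∀ b : Fin (n + 2) → B,
        bRaw D A.fn g ρ b
          = ∑ i : Fin (n + 2), ((-1 : ℂ) ^ (i : ℕ)) * g ρ (twCon (A.fn ρ) i b)) ∧
    -- compatibility of the pairings on `H`-invariant idempotents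
    (∀ (n : ℕ) (ι : Type) [Fintype ι] [DecidableEq ι],
      ∀ (P : MRep H ι) (p : Matrix ι ι B), p * p = p →
      (∀ ω : H, matAct D P A.toRAct ω p = epsi ω • p) →
      ∀ f : Raw H B (2 * n), IsCocycle D A.fn f →
        (∑ k : Fin (2 * n + 2) → ι,
          (P.π ρi) (k (Fin.last (2 * n + 1))) (k 0) *
            f ρ (fun i => p (k i.castSucc) (k i.succ)))
          = PsiRaw D P f ρ (fun _ => p)) :=
  rho_star_to_twisted_cyclic_general D A ρ ρi hgrp hρρi

end
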